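/- Let m≥2 be an integer and let (a_n)_{n∈ℕ} be a real sequence such that |a_n| ≤ C₀·ℰ_n^{−m} for some C₀>0 and all n. Then there exist constants c₀, c₁, …, c_{m−2} ∈ ℝ such that lim_{t→0⁺} t^{−(m−2)}·(Σ_{n=0}^∞ e^{−tℰ_n}·a_n − Σ_{j=0}^{m−2} c_j·t^j) = 0; that is, Σ_{n=0}^∞ e^{−tℰ_n}·a_n admits the asymptotic expansion c₀ + c₁t + … + c_{m−2}t^{m−2} + o(t^{m−2}) as t→0⁺. -/

import Mathlib

/-!
Expanding `exp (-t E n)` termwise to order `p` produces the coefficients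
`c j = (-1)^j / j! * ∑ E n ^ j * a n`, which converge once `∑ a n` and `∑ E n ^ p * a n` do.
The Taylor remainder `R (p+1) x` of `exp (-x)` satisfies, for `x ≥ 0`, both
`|R (p+1) x| ≤ x^(p+1)/(p+1)!` and `|R (p+1) x| ≤ 2 x^p/p!`. The first makes every term of
`t^(-p) * ∑ R (p+1) (t E n) * a n` tend to `0`, the second dominates them uniformly in `t` by
the summable `2/p! * E n^p |a n|`, and dominated convergence for series concludes.
For `E n = ω (n + 1/2)` and `m = p + 2`, the decay `|a n| ≤ C₀ E n^(-m)` gives both summabilities.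
-/

open Real Set Filter Topology

open Finset
open scoped Nat

noncomputable def expNegTaylorRemainder (k : ℕ) (x : ℝ) : ℝ :=
  exp (-x) - ∑ j ∈ range k, (-x) ^ j / j !

lemma expNegTaylorRemainder_succ (k : ℕ) (x : ℝ) :
    expNegTaylorRemainder (k + 1) x = expNegTaylorRemainder k x - (-x) ^ k / k ! := by
  simp only [expNegTaylorRemainder, sum_range_succ]
  ring

lemma expNegTaylorRemainder_succ_zero (k : ℕ) : expNegTaylorRemainder (k + 1) 0 = 0 := by
  simp [expNegTaylorRemainder, sum_range_succ']

lemma hasDerivAt_pow_succ_div_factorial (k : ℕ) (x : ℝ) :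
    HasDerivAt (fun x : ℝ => x ^ (k + 1) / (k + 1)!) (x ^ k / k !) x := by
  refine ((hasDerivAt_pow (k + 1) x).div_const ((k + 1)! : ℝ)).congr_deriv ?_
  rw [Nat.factorial_succ]
  push_cast
  field_simp

lemma hasDerivAt_expNegTaylorRemainder_succ (k : ℕ) (x : ℝ) :
    HasDerivAt (expNegTaylorRemainder (k + 1)) (-expNegTaylorRemainder k x) x := by
  induction k generalizing x with
  | zero =>
    have hR : expNegTaylorRemainder 1 = fun x => exp (-x) - 1 := by
      funext y
      simp [expNegTaylorRemainder]
    rw [hR]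
    simpa [expNegTaylorRemainder] using ((hasDerivAt_neg x).exp).sub_const 1
  | succ k ih =>
    have hpow := (hasDerivAt_pow_succ_div_factorial k (-x)).comp x (hasDerivAt_neg x)
    rw [funext (expNegTaylorRemainder_succ (k + 1))]
    refine ((ih x).sub hpow).congr_deriv ?_
    rw [expNegTaylorRemainder_succ]
    ring

lemma abs_expNegTaylorRemainder_le (k : ℕ) {x : ℝ} (hx : 0 ≤ x) :
    |expNegTaylorRemainder k x| ≤ x ^ k / k ! := by
  induction k generalizing x with
  | zero =>
    simpa [expNegTaylorRemainder, abs_of_pos (exp_pos _)] using hx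
  | succ k ih =>
    refine image_norm_le_of_norm_deriv_right_le_deriv_boundary (E := ℝ) (a := 0) (b := x)
      (fun y _ => (hasDerivAt_expNegTaylorRemainder_succ k y).continuousAt.continuousWithinAt)
      (fun y _ => (hasDerivAt_expNegTaylorRemainder_succ k y).hasDerivWithinAt)
      (by simp [expNegTaylorRemainder_succ_zero]) (hasDerivAt_pow_succ_div_factorial k)
      (fun y hy => ?_) ⟨hx, le_rfl⟩
    rw [norm_neg, Real.norm_eq_abs]
    exact ih hy.1

lemma abs_expNegTaylorRemainder_succ_le (k : ℕ) {x : ℝ} (hx : 0 ≤ x) :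
    |expNegTaylorRemainder (k + 1) x| ≤ 2 * (x ^ k / k !) := by
  have hterm : |(-x) ^ k / k !| = x ^ k / k ! := by
    rw [abs_div, abs_pow, abs_neg, abs_of_nonneg hx, Nat.abs_cast]
  calc |expNegTaylorRemainder (k + 1) x|
      ≤ |expNegTaylorRemainder k x| + |(-x) ^ k / k !| := by
        rw [expNegTaylorRemainder_succ]
        exact abs_sub _ _
    _ ≤ 2 * (x ^ k / k !) := by
        linarith [abs_expNegTaylorRemainder_le k hx]

lemma abs_expNegTaylorRemainder_succ_mul_div_pow_le (p : ℕ) {t y : ℝ} (ht : 0 < t) (hy : 0 ≤ y) :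
    |expNegTaylorRemainder (p + 1) (t * y) / t ^ p| ≤ 2 * (y ^ p / p !) := by
  rw [abs_div, abs_of_pos (pow_pos ht p), div_le_iff₀ (pow_pos ht p)]
  calc |expNegTaylorRemainder (p + 1) (t * y)| ≤ 2 * ((t * y) ^ p / p !) :=
        abs_expNegTaylorRemainder_succ_le p (by positivity)
    _ = 2 * (y ^ p / p !) * t ^ p := by ring

lemma tendsto_expNegTaylorRemainder_succ_mul_div_pow (p : ℕ) {y : ℝ} (hy : 0 ≤ y) :
    Tendsto (fun t => expNegTaylorRemainder (p + 1) (t * y) / t ^ p) (𝓝[>] 0) (𝓝 0) := by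
  have hlin : Tendsto (fun t : ℝ => t * (y ^ (p + 1) / (p + 1)!)) (𝓝[>] 0) (𝓝 0) := by
    simpa using ((continuous_mul_const (y ^ (p + 1) / (p + 1)!)).tendsto' 0 0 (zero_mul _)).mono_left
      nhdsWithin_le_nhds
  refine squeeze_zero_norm' ?_ hlin
  filter_upwards [self_mem_nhdsWithin] with t (ht : 0 < t)
  rw [Real.norm_eq_abs, abs_div, abs_of_pos (pow_pos ht p), div_le_iff₀ (pow_pos ht p)]
  calc |expNegTaylorRemainder (p + 1) (t * y)| ≤ (t * y) ^ (p + 1) / (p + 1)! :=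
        abs_expNegTaylorRemainder_le (p + 1) (by positivity)
    _ = t * (y ^ (p + 1) / (p + 1)!) * t ^ p := by ring

lemma pow_le_one_add_pow {x : ℝ} (hx : 0 ≤ x) {j p : ℕ} (hjp : j ≤ p) : x ^ j ≤ 1 + x ^ p := by
  rcases le_total x 1 with hx1 | hx1
  · linarith [pow_le_one₀ hx hx1 (n := j), pow_nonneg hx p]
  · linarith [pow_le_pow_right₀ hx1 hjp]

section

variable {E a : ℕ → ℝ} {p : ℕ}

lemma summable_pow_mul_of_le (hE : ∀ n, 0 ≤ E n) (ha : Summable a)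
    (hEa : Summable fun n => E n ^ p * a n) {j : ℕ} (hjp : j ≤ p) :
    Summable fun n => E n ^ j * a n := by
  refine (ha.abs.add hEa.abs).of_norm_bounded fun n => ?_
  rw [Real.norm_eq_abs, abs_mul, abs_mul, abs_of_nonneg (pow_nonneg (hE n) j),
    abs_of_nonneg (pow_nonneg (hE n) p)]
  nlinarith [pow_le_one_add_pow (hE n) hjp, abs_nonneg (a n)]

lemma tsum_exp_neg_mul_sub_taylor (hE : ∀ n, 0 ≤ E n) (ha : Summable a)
    (hEa : Summable fun n => E n ^ p * a n) {t : ℝ} (ht : 0 ≤ t) :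
    (∑' n, exp (-(t * E n)) * a n)
        - ∑ j ∈ range (p + 1), (-1) ^ j / j ! * (∑' n, E n ^ j * a n) * t ^ j
      = ∑' n, expNegTaylorRemainder (p + 1) (t * E n) * a n := by
  have hexp : Summable fun n => exp (-(t * E n)) * a n := by
    refine ha.abs.of_norm_bounded fun n => ?_
    rw [Real.norm_eq_abs, abs_mul, abs_exp]
    exact mul_le_of_le_one_left (abs_nonneg _)
      (exp_le_one_iff.mpr (neg_nonpos.mpr (mul_nonneg ht (hE n))))
  have hterm (j : ℕ) (n : ℕ) :
      (-(t * E n)) ^ j / j ! * a n = (-1) ^ j / j ! * t ^ j * (E n ^ j * a n) := by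
    rw [neg_eq_neg_one_mul, mul_pow, mul_pow]
    ring
  have hpow : ∀ j ∈ range (p + 1), Summable fun n => (-(t * E n)) ^ j / j ! * a n := by
    intro j hj
    simp_rw [hterm]
    exact (summable_pow_mul_of_le hE ha hEa (Nat.lt_succ_iff.mp (mem_range.mp hj))).mul_left _
  have hswap : ∑ j ∈ range (p + 1), (-1) ^ j / j ! * (∑' n, E n ^ j * a n) * t ^ j
      = ∑' n, ∑ j ∈ range (p + 1), (-(t * E n)) ^ j / j ! * a n := by
    rw [Summable.tsum_finsetSum hpow]
    refine sum_congr rfl fun j _ => ?_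
    simp_rw [hterm, tsum_mul_left]
    ring
  rw [hswap, ← hexp.tsum_sub (summable_sum hpow)]
  simp only [expNegTaylorRemainder, sub_mul, sum_mul]

theorem tendsto_tsum_exp_neg_mul_sub_taylor_div_pow (hE : ∀ n, 0 ≤ E n) (ha : Summable a)
    (hEa : Summable fun n => E n ^ p * a n) :
    Tendsto (fun t => ((∑' n, exp (-(t * E n)) * a n)
        - ∑ j ∈ range (p + 1), (-1) ^ j / j ! * (∑' n, E n ^ j * a n) * t ^ j) / t ^ p)
      (𝓝[>] 0) (𝓝 0) := by
  have hdom : Tendsto (fun t => ∑' n, expNegTaylorRemainder (p + 1) (t * E n) / t ^ p * a n)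
      (𝓝[>] 0) (𝓝 0) := by
    simpa using tendsto_tsum_of_dominated_convergence (bound := fun n => 2 / p ! * |E n ^ p * a n|)
      (hEa.abs.mul_left _)
      (fun n => (tendsto_expNegTaylorRemainder_succ_mul_div_pow p (hE n)).mul_const (a n))
      (by
        filter_upwards [self_mem_nhdsWithin] with t (ht : 0 < t) n
        rw [Real.norm_eq_abs, abs_mul, abs_mul, abs_of_nonneg (pow_nonneg (hE n) p)]
        have := abs_expNegTaylorRemainder_succ_mul_div_pow_le p ht (hE n)
        calc _ ≤ 2 * (E n ^ p / p !) * |a n| := by gcongr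
          _ = _ := by ring)
  refine hdom.congr' ?_
  filter_upwards [self_mem_nhdsWithin] with t (ht : 0 < t)
  rw [tsum_exp_neg_mul_sub_taylor hE ha hEa ht.le, ← tsum_div_const]
  exact tsum_congr fun n => by ring

end

lemma summable_one_div_mul_nat_add_pow (ω b : ℝ) {k : ℕ} (hk : 2 ≤ k) :
    Summable fun n : ℕ => 1 / (ω * (n + b)) ^ k := by
  have h := ((Real.summable_one_div_nat_add_rpow b k).mpr (by exact_mod_cast hk)).mul_left
    (1 / |ω| ^ k)
  refine h.of_norm_bounded fun n => le_of_eq ?_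
  rw [Real.norm_eq_abs, Real.rpow_natCast, abs_div, abs_one, abs_pow, abs_mul]
  ring

theorem stmt17
    (ω : ℝ) (hω : 0 < ω) (m : ℕ) (hm : 2 ≤ m)
    (a : ℕ → ℝ) (C₀ : ℝ)
    (ha : ∀ n : ℕ, |a n| ≤ C₀ / (ω * (n + 1/2))^m) :
    ∃ c : ℕ → ℝ,
      Tendsto (fun t : ℝ =>
          ((∑' n : ℕ, Real.exp (-(t * (ω * (n + 1/2)))) * a n)
            - ∑ j ∈ Finset.range (m-1), c j * t^j) / t^(m-2))
        (𝓝[>] 0) (𝓝 0) := by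
  obtain ⟨p, rfl⟩ : ∃ p, m = p + 2 := ⟨m - 2, by omega⟩
  set E : ℕ → ℝ := fun n => ω * (n + 1/2)
  have hE : ∀ n, 0 < E n := fun n => by positivity
  have ha_summable : Summable a :=
    ((summable_one_div_mul_nat_add_pow ω (1/2) (by omega)).mul_left C₀).of_norm_bounded
      fun n => by rw [Real.norm_eq_abs, ← div_eq_mul_one_div]; exact ha n
  have hEa_summable : Summable fun n => E n ^ p * a n := by
    refine ((summable_one_div_mul_nat_add_pow ω (1/2) le_rfl).mul_left C₀).of_norm_bounded
      fun n => ?_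
    have hEn : 0 < E n := hE n
    calc ‖E n ^ p * a n‖ = E n ^ p * |a n| := by
          rw [Real.norm_eq_abs, abs_mul, abs_of_pos (pow_pos hEn p)]
      _ ≤ E n ^ p * (C₀ / E n ^ (p + 2)) := by gcongr; exact ha n
      _ = C₀ * (1 / E n ^ 2) := by field_simp; ring
  exact ⟨_, tendsto_tsum_exp_neg_mul_sub_taylor_div_pow (fun n => (hE n).le) ha_summable
    hEa_summable⟩
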